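/- Let G be a finite simple graph without isolated vertices and let k be a positive integer. Then G is a total k-uniform chordal graph if and only if G is the disjoint union of k/2 complete multipartite graphs, each having at least two parts and at most one part of size greater than 1. -/

import Mathlib

open SimpleGraph

/-- `A ⊆ V(G)` is a total dominating set of `G`: every vertex has a neighbor in `A`. -/
def TotalDomSet {V : Type*} (G : SimpleGraph V) (A : Set V) : Prop :=
  ∀ v : V, ∃ a ∈ A, G.Adj v a

/-- `s` is a legal (open neighborhood) sequence of `G`: the vertices are distinct and every
vertex after the first has a neighbor adjacent to no vertex preceding it in the sequence. -/
def LegalSeq {V : Type*} (G : SimpleGraph V) (s : List V) : Prop :=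
  s.Nodup ∧ ∀ (i : ℕ) (h : i < s.length), 0 < i →
    ∃ w : V, G.Adj (s.get ⟨i, h⟩) w ∧ ∀ u ∈ s.take i, ¬ G.Adj u w

/-- `s` is a total dominating sequence of `G`: a legal sequence whose underlying set is a
total dominating set. -/
def TotalDomSeq {V : Type*} (G : SimpleGraph V) (s : List V) : Prop :=
  LegalSeq G s ∧ TotalDomSet G {v | v ∈ s}

/-- The total domination number `γ_t(G)`: the minimum size of a total dominating set. -/
noncomputable def totalDomNum {V : Type*} (G : SimpleGraph V) : ℕ :=
  sInf {n | ∃ A : Set V, TotalDomSet G A ∧ A.ncard = n}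

/-- The Grundy total domination number `γ_gr^t(G)`: the maximum length of a total dominating
sequence. -/
noncomputable def grundyTotalDomNum {V : Type*} (G : SimpleGraph V) : ℕ :=
  sSup {n | ∃ s : List V, TotalDomSeq G s ∧ s.length = n}

/-- `G` is total `k`-uniform if `γ_t(G) = γ_gr^t(G) = k`. -/
def TotalKUniform {V : Type*} (G : SimpleGraph V) (k : ℕ) : Prop :=
  totalDomNum G = k ∧ grundyTotalDomNum G = k

/-- `G` has no isolated vertices. -/
def NoIsolatedVerts {V : Type*} (G : SimpleGraph V) : Prop :=
  ∀ v : V, ∃ w : V, G.Adj v w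

/-- The closed neighborhood `N[v] = N(v) ∪ {v}`. -/
def closedNbhd {V : Type*} (G : SimpleGraph V) (v : V) : Set V :=
  insert v (G.neighborSet v)

/-- `G` is false twin-free: no two distinct vertices have the same (open) neighborhood. -/
def FalseTwinFree {V : Type*} (G : SimpleGraph V) : Prop :=
  ∀ u v : V, u ≠ v → G.neighborSet u ≠ G.neighborSet v

/-- `G` is chordal: it contains no induced cycle of length greater than 3. -/
def IsChordal {V : Type*} (G : SimpleGraph V) : Prop :=
  ∀ (n : ℕ), 4 ≤ n → ∀ S : Set V, ¬ Nonempty (G.induce S ≃g SimpleGraph.cycleGraph n)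

/-- `G` is the disjoint union of `m` complete multipartite graphs, each having at least two
parts and at most one part of size greater than 1. Here `f` assigns to each vertex the index
of the component containing it, `c` assigns to each vertex its part within its component, two
vertices are adjacent iff they lie in the same component but in different parts, every
component has at least two parts, and in every component at most one part has more than one
vertex. -/
def DisjUnionCompMultipartiteOneBig {V : Type*} (G : SimpleGraph V) (m : ℕ) : Prop :=
  ∃ (f : V → Fin m) (c : V → ℕ),
    (∀ u v : V, G.Adj u v ↔ (f u = f v ∧ c u ≠ c v)) ∧
    (∀ i : Fin m, ∃ u v : V, f u = i ∧ f v = i ∧ c u ≠ c v) ∧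
    (∀ i : Fin m, ∀ j₁ j₂ : ℕ, 1 < {x : V | f x = i ∧ c x = j₁}.ncard →
      1 < {x : V | f x = i ∧ c x = j₂}.ncard → j₁ = j₂)

/-!
Total uniformity yields an exchange property: two nested legal sequences dominating the same
vertices have the same length, because both extend by a common suffix to total dominating
sequences, all of which have length `k`. In a chordal graph every component contains an edge
`uv` with `N(v) ⊆ N[u]`; exchange arguments first spread this to show that `u` dominates its
component, and then that non-adjacent vertices of a component are false twins. So every
component is complete multipartite, its parts being the twin classes, and two parts of size at
least two would span an induced `C₄`. A dominating edge in each component gives a total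
dominating sequence with two vertices per component, hence `k = 2m`.

Conversely, in such a union a legal sequence takes at most two vertices from each component and
a total dominating set at least two, so `γ_t = γ_gr^t = 2m`; a chordless cycle would alternate
between two parts of one component, each of size at least two.
-/

section Neighbourhoods

variable {V : Type*} {G : SimpleGraph V}

lemma mem_closedNbhd {u z : V} : z ∈ closedNbhd G u ↔ z = u ∨ G.Adj u z := Iff.rfl

lemma SimpleGraph.Reachable.mem_of_forall_neighborSet_subset {S : Set V}
    (hS : ∀ a ∈ S, G.neighborSet a ⊆ S) {a z : V} (ha : a ∈ S) (h : G.Reachable a z) :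
    z ∈ S := by
  obtain ⟨p⟩ := h
  induction p with
  | nil => exact ha
  | cons hadj _ ih => exact ih (hS _ ha hadj)

end Neighbourhoods

section LegalSeq

variable {V : Type*} {G : SimpleGraph V} {s t : List V} {x : V}

def dominatedBy (G : SimpleGraph V) (s : List V) : Set V := {w | ∃ u ∈ s, G.Adj u w}

@[simp]
lemma mem_dominatedBy {w : V} : w ∈ dominatedBy G s ↔ ∃ u ∈ s, G.Adj u w := Iff.rfl

lemma dominatedBy_append : dominatedBy G (s ++ t) = dominatedBy G s ∪ dominatedBy G t := by
  ext w
  simp [or_and_right, exists_or]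

lemma legalSeq_nil : LegalSeq G ([] : List V) := ⟨List.nodup_nil, by simp⟩

lemma legalSeq_singleton (x : V) : LegalSeq G [x] := ⟨List.nodup_singleton x, by simp⟩

lemma legalSeq_append_singleton_iff :
    LegalSeq G (s ++ [x]) ↔
      LegalSeq G s ∧ x ∉ s ∧ (s = [] ∨ ∃ w, G.Adj x w ∧ w ∉ dominatedBy G s) := by
  simp only [LegalSeq, List.nodup_append, List.nodup_singleton, List.mem_singleton,
    List.get_eq_getElem, List.length_append, List.length_singleton, mem_dominatedBy]
  constructor
  · rintro ⟨⟨hnd, -, hdisj⟩, hw⟩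
    refine ⟨⟨hnd, fun i hi hi0 => ?_⟩, fun hx => hdisj x hx x rfl rfl, ?_⟩
    · obtain ⟨w, hw1, hw2⟩ := hw i (by omega) hi0
      rw [List.getElem_append_left hi] at hw1
      exact ⟨w, hw1, fun u hu => hw2 u (by rwa [List.take_append_of_le_length hi.le])⟩
    · refine (eq_or_ne s []).imp id fun hs => ?_
      obtain ⟨w, hw1, hw2⟩ := hw s.length (by omega) (List.length_pos_iff.2 hs)
      rw [List.getElem_append_right le_rfl] at hw1
      refine ⟨w, by simpa using hw1, fun ⟨u, hu, hadj⟩ => hw2 u ?_ hadj⟩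
      rwa [List.take_append_of_le_length le_rfl, List.take_length]
  · rintro ⟨⟨hnd, hw⟩, hx, hwit⟩
    refine ⟨⟨hnd, trivial, fun a ha b hb hab => hx (hb ▸ hab ▸ ha)⟩, fun i hi hi0 => ?_⟩
    rcases lt_or_ge i s.length with h | h
    · obtain ⟨w, hw1, hw2⟩ := hw i h hi0
      rw [List.getElem_append_left h]
      exact ⟨w, hw1, fun u hu => hw2 u (by rwa [List.take_append_of_le_length h.le] at hu)⟩
    · obtain rfl : i = s.length := by omega
      rcases hwit with rfl | ⟨w, hw1, hw2⟩
      · simp at hi0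
      · rw [List.getElem_append_right le_rfl, List.take_append_of_le_length le_rfl,
          List.take_length]
        exact ⟨w, by simpa using hw1, fun u hu hadj => hw2 ⟨u, hu, hadj⟩⟩

lemma legalSeq_pair_iff {a b : V} :
    LegalSeq G [a, b] ↔ a ≠ b ∧ ∃ w, G.Adj b w ∧ ¬ G.Adj a w := by
  rw [show [a, b] = [a] ++ [b] from rfl, legalSeq_append_singleton_iff]
  simp [legalSeq_singleton, eq_comm]

lemma legalSeq_triple_iff {a b c : V} :
    LegalSeq G [a, b, c] ↔ LegalSeq G [a, b] ∧ c ≠ a ∧ c ≠ b ∧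
      ∃ w, G.Adj c w ∧ ¬ G.Adj a w ∧ ¬ G.Adj b w := by
  rw [show [a, b, c] = [a, b] ++ [c] from rfl, legalSeq_append_singleton_iff]
  simp [and_assoc]

/-- Whether a vertex may be appended depends only on the set dominated so far. -/
lemma LegalSeq.append_of_subset {s' : List V} (hs : LegalSeq G s) (hsub : s ⊆ s')
    (hdom : dominatedBy G s = dominatedBy G s') (ht : LegalSeq G (s' ++ t)) :
    LegalSeq G (s ++ t) := by
  induction t using List.reverseRecOn with
  | nil => simpa using hs
  | append_singleton t y ih =>
    rw [← List.append_assoc, legalSeq_append_singleton_iff] at ht ⊢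
    obtain ⟨ht, hy, hwit⟩ := ht
    refine ⟨ih ht, fun h => hy (List.mem_append.2 ((List.mem_append.1 h).imp_left (hsub ·))), ?_⟩
    rcases hwit with h | ⟨w, hyw, hw⟩
    · obtain ⟨rfl, rfl⟩ := List.append_eq_nil_iff.1 h
      exact Or.inl (by simpa using List.eq_nil_of_subset_nil hsub)
    · rw [dominatedBy_append, ← hdom, ← dominatedBy_append] at hw
      exact Or.inr ⟨w, hyw, hw⟩

variable [Finite V]

lemma LegalSeq.length_le_card (hs : LegalSeq G s) : s.length ≤ Nat.card V := by
  have := Fintype.ofFinite V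
  rw [Nat.card_eq_fintype_card]
  exact hs.1.length_le_card

lemma LegalSeq.exists_append_saturated {s : List V} (hs : LegalSeq G s) :
    ∃ t, LegalSeq G (s ++ t) ∧ ∀ x ∉ s ++ t, G.neighborSet x ⊆ dominatedBy G (s ++ t) := by
  by_cases h : ∃ x ∉ s, ∃ w, G.Adj x w ∧ w ∉ dominatedBy G s
  · obtain ⟨x, hx, w, hxw, hw⟩ := h
    have hsx : LegalSeq G (s ++ [x]) :=
      legalSeq_append_singleton_iff.2 ⟨hs, hx, Or.inr ⟨w, hxw, hw⟩⟩
    have := hsx.length_le_card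
    obtain ⟨t, ht, hsat⟩ := hsx.exists_append_saturated
    exact ⟨x :: t, by simpa using ht, by simpa using hsat⟩
  · push Not at h
    exact ⟨[], by simpa using hs, fun x hx w hw => by simpa using h x (by simpa using hx) w hw⟩
termination_by Nat.card V - s.length
decreasing_by simp only [List.length_append, List.length_singleton] at this ⊢; omega

end LegalSeq

section DominationNumbers

variable {V : Type*} {G : SimpleGraph V} {s : List V} {k : ℕ}

lemma totalDomSet_setOf_mem_iff : TotalDomSet G {v | v ∈ s} ↔ ∀ v, v ∈ dominatedBy G s := by
  simp only [TotalDomSet, Set.mem_ofPred_eq, mem_dominatedBy, G.adj_comm]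

lemma ncard_setOf_mem (hs : s.Nodup) : {v | v ∈ s}.ncard = s.length := by
  classical
  rw [show {v | v ∈ s} = ↑s.toFinset by ext; simp, Set.ncard_coe_finset,
    List.toFinset_card_of_nodup hs]

lemma TotalDomSeq.totalDomNum_le_length (hs : TotalDomSeq G s) : totalDomNum G ≤ s.length :=
  Nat.sInf_le ⟨_, hs.2, ncard_setOf_mem hs.1.1⟩

lemma TotalDomSeq.length_le_grundyTotalDomNum [Finite V] (hs : TotalDomSeq G s) :
    s.length ≤ grundyTotalDomNum G :=
  le_csSup ⟨Nat.card V, by rintro _ ⟨s', hs', rfl⟩; exact hs'.1.length_le_card⟩ ⟨s, hs, rfl⟩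

lemma TotalKUniform.length_eq [Finite V] (huni : TotalKUniform G k) (hs : TotalDomSeq G s) :
    s.length = k :=
  le_antisymm (huni.2 ▸ hs.length_le_grundyTotalDomNum) (huni.1 ▸ hs.totalDomNum_le_length)

lemma totalKUniform_of_totalDomSeq (hs : TotalDomSeq G s) (hlen : s.length = k)
    (hmax : ∀ s', TotalDomSeq G s' → s'.length ≤ k)
    (hmin : ∀ A, TotalDomSet G A → k ≤ A.ncard) : TotalKUniform G k := by
  refine ⟨le_antisymm (hlen ▸ hs.totalDomNum_le_length) ?_, le_antisymm ?_ ?_⟩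
  · exact le_csInf ⟨_, _, hs.2, rfl⟩ (by rintro _ ⟨A, hA, rfl⟩; exact hmin A hA)
  · exact csSup_le ⟨_, s, hs, rfl⟩ (by rintro _ ⟨s', hs', rfl⟩; exact hmax s' hs')
  · exact hlen ▸ le_csSup ⟨k, by rintro _ ⟨s', hs', rfl⟩; exact hmax s' hs'⟩ ⟨s, hs, rfl⟩

end DominationNumbers

section Blocks

variable {V ι : Type*} {G : SimpleGraph V} (β : V → ι)

lemma legalSeq_flatMap_of_blocks (hβ : ∀ u v, G.Adj u v → β u = β v) {a b : ι → V}
    (ha : ∀ i, β (a i) = i) (hab : ∀ i, G.Adj (a i) (b i)) {l : List ι} (hl : l.Nodup) :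
    LegalSeq G (l.flatMap fun i => [a i, b i]) := by
  have hb i : β (b i) = i := (hβ _ _ (hab i)).symm.trans (ha i)
  induction l using List.reverseRecOn with
  | nil => exact legalSeq_nil
  | append_singleton l i ih =>
    obtain ⟨hl, -, hil⟩ := List.nodup_append.1 hl
    set s := l.flatMap fun i => [a i, b i]
    have hβs : ∀ u ∈ s, β u ∈ l := by
      simp only [s, List.mem_flatMap, List.mem_cons, List.not_mem_nil, or_false]
      rintro u ⟨j, hj, rfl | rfl⟩ <;> simpa [ha, hb]
    have hnot : ∀ u, β u = i → u ∉ s ∧ u ∉ dominatedBy G s := fun u hu =>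
      ⟨fun h => hil _ (hβs u h) i (by simp) hu, fun ⟨v, hv, hvu⟩ =>
        hil _ (hβs v hv) i (by simp) ((hβ _ _ hvu).trans hu)⟩
    have hsplit : (l ++ [i]).flatMap (fun i => [a i, b i]) = s ++ [a i] ++ [b i] := by simp [s]
    rw [hsplit]
    refine legalSeq_append_singleton_iff.2 ⟨legalSeq_append_singleton_iff.2
      ⟨ih hl, (hnot _ (ha i)).1, Or.inr ⟨b i, hab i, (hnot _ (hb i)).2⟩⟩, ?_,
      Or.inr ⟨a i, (hab i).symm, ?_⟩⟩
    · rw [List.mem_append, List.mem_singleton]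
      exact fun h => h.elim (hnot _ (hb i)).1 (hab i).ne'
    · rw [dominatedBy_append]
      rintro (h | ⟨u, hu, hua⟩)
      · exact (hnot _ (ha i)).2 h
      · exact G.irrefl (List.mem_singleton.1 hu ▸ hua)

lemma exists_totalDomSeq_of_blocks [Finite ι] (hβ : ∀ u v, G.Adj u v → β u = β v)
    {a b : ι → V} (ha : ∀ i, β (a i) = i) (hab : ∀ i, G.Adj (a i) (b i))
    (hdom : ∀ z, G.Adj (a (β z)) z ∨ G.Adj (b (β z)) z) :
    ∃ s, TotalDomSeq G s ∧ s.length = 2 * Nat.card ι := by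
  have := Fintype.ofFinite ι
  refine ⟨_, ⟨legalSeq_flatMap_of_blocks β hβ ha hab Finset.univ.nodup_toList,
    totalDomSet_setOf_mem_iff.2 fun z => ?_⟩, by simp [Nat.card_eq_fintype_card, mul_comm]⟩
  rcases hdom z with h | h
  · exact ⟨a (β z), List.mem_flatMap.2 ⟨β z, by simp⟩, h⟩
  · exact ⟨b (β z), List.mem_flatMap.2 ⟨β z, by simp⟩, h⟩

end Blocks

section Uniform

variable {V : Type*} [Finite V] {G : SimpleGraph V} {k : ℕ} {s s' : List V}

lemma LegalSeq.exists_append_totalDomSeq (hiso : NoIsolatedVerts G) (hs : LegalSeq G s) :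
    ∃ t, TotalDomSeq G (s ++ t) := by
  obtain ⟨t, ht, hsat⟩ := hs.exists_append_saturated
  refine ⟨t, ht, totalDomSet_setOf_mem_iff.2 fun v => ?_⟩
  obtain ⟨w, hvw⟩ := hiso v
  by_cases hw : w ∈ s ++ t
  · exact ⟨w, hw, hvw.symm⟩
  · exact hsat w hw hvw.symm

lemma TotalKUniform.length_eq_of_subset (huni : TotalKUniform G k) (hiso : NoIsolatedVerts G)
    (hs : LegalSeq G s) (hs' : LegalSeq G s') (hsub : s ⊆ s')
    (hdom : dominatedBy G s = dominatedBy G s') : s.length = s'.length := by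
  obtain ⟨t, ht⟩ := hs'.exists_append_totalDomSeq hiso
  have hst : TotalDomSeq G (s ++ t) := by
    refine ⟨hs.append_of_subset hsub hdom ht.1, totalDomSet_setOf_mem_iff.2 ?_⟩
    rw [dominatedBy_append, hdom, ← dominatedBy_append]
    exact totalDomSet_setOf_mem_iff.1 ht.2
  simpa using (huni.length_eq hst).trans (huni.length_eq ht).symm

lemma TotalKUniform.not_neighborSet_subset_union (huni : TotalKUniform G k)
    (hiso : NoIsolatedVerts G) {a b c : V} (h : LegalSeq G [a, c, b]) :
    ¬ G.neighborSet c ⊆ G.neighborSet a ∪ G.neighborSet b := by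
  intro hc
  obtain ⟨-, hba, -, w, hbw, haw, -⟩ := legalSeq_triple_iff.1 h
  have hab : LegalSeq G [a, b] := legalSeq_pair_iff.2 ⟨Ne.symm hba, w, hbw, haw⟩
  have hdom : dominatedBy G [a, b] = dominatedBy G [a, c, b] := by
    ext z
    have := @hc z
    simp only [mem_dominatedBy, List.mem_cons, List.not_mem_nil, or_false, exists_eq_or_imp,
      exists_eq_left, Set.mem_union, mem_neighborSet] at this ⊢
    tauto
  have := huni.length_eq_of_subset hiso hab h (by simp) hdom
  simp at this

/-- Otherwise `[u, v, x]` would be a legal sequence from which `v` could be dropped. -/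
lemma TotalKUniform.neighborSet_subset_closedNbhd (huni : TotalKUniform G k)
    (hiso : NoIsolatedVerts G) {u v x : V} (huv : G.Adj u v)
    (hv : G.neighborSet v ⊆ closedNbhd G u) (hux : G.Adj u x) :
    G.neighborSet x ⊆ closedNbhd G u := by
  by_cases hxv : x = v
  · exact hxv ▸ hv
  intro w hxw
  by_contra hw
  simp only [mem_closedNbhd, not_or] at hw
  refine huni.not_neighborSet_subset_union hiso (a := u) (c := v) (b := x) ?_ ?_
  · refine legalSeq_triple_iff.2 ⟨legalSeq_pair_iff.2 ⟨huv.ne, u, huv.symm, G.irrefl⟩,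
      hux.ne', hxv, w, hxw, hw.2, fun hvw => ?_⟩
    exact (hv hvw).elim hw.1 hw.2
  · intro z hvz
    rcases hv hvz with rfl | huz
    · exact Or.inr hux.symm
    · exact Or.inl huz

lemma TotalKUniform.reachable_mem_closedNbhd (huni : TotalKUniform G k)
    (hiso : NoIsolatedVerts G) {u v z : V} (huv : G.Adj u v)
    (hv : G.neighborSet v ⊆ closedNbhd G u) (hz : G.Reachable u z) : z ∈ closedNbhd G u := by
  refine Reachable.mem_of_forall_neighborSet_subset (fun a ha => ?_) (Set.mem_insert u _) hz
  rcases ha with rfl | hua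
  · exact Set.subset_insert _ _
  · exact huni.neighborSet_subset_closedNbhd hiso huv hv hua

/-- A neighbour of `q` outside `N(p)` would make `[p, q, u]` legal, with `q` superfluous. -/
lemma TotalKUniform.neighborSet_eq_of_not_adj (huni : TotalKUniform G k)
    (hiso : NoIsolatedVerts G) {u p q : V} (hu : ∀ z, G.Reachable u z → z ∈ closedNbhd G u)
    (hp : G.Reachable u p) (hq : G.Reachable u q) (hpq : p ≠ q) (hnadj : ¬ G.Adj p q) :
    G.neighborSet p = G.neighborSet q := by
  suffices key : ∀ p q, G.Reachable u p → G.Reachable u q → p ≠ q → ¬ G.Adj p q →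
      G.neighborSet q ⊆ G.neighborSet p from
    (key q p hq hp hpq.symm fun h => hnadj h.symm).antisymm (key p q hp hq hpq hnadj)
  intro p q hp hq hpq hnadj w hqw
  by_contra hpw
  have hpu : p ≠ u := by rintro rfl; exact hnadj ((hu q hq).resolve_left hpq.symm)
  have hqu : q ≠ u := by rintro rfl; exact hnadj ((hu p hp).resolve_left hpq).symm
  have hup : G.Adj u p := (hu p hp).resolve_left hpu
  have huq : G.Adj u q := (hu q hq).resolve_left hqu
  refine huni.not_neighborSet_subset_union hiso (a := p) (c := q) (b := u) ?_ ?_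
  · exact legalSeq_triple_iff.2 ⟨legalSeq_pair_iff.2 ⟨hpq, w, hqw, hpw⟩, hup.ne, huq.ne,
      p, hup, G.irrefl, fun h => hnadj h.symm⟩
  · intro z hqz
    rcases hu z (hq.trans hqz.reachable) with rfl | huz
    · exact Or.inl hup.symm
    · exact Or.inr huz

end Uniform

section Chordal

variable {V : Type*} {G : SimpleGraph V}

/-- Adjacency in the `n`-cycle on the vertices `0, …, n - 1`, written without subtraction. -/
def CycleAdj (n i j : ℕ) : Prop :=
  i + 1 = j ∨ j + 1 = i ∨ (i = 0 ∧ j + 1 = n) ∨ (j = 0 ∧ i + 1 = n)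

lemma cycleGraph_adj_iff_cycleAdj {n : ℕ} (hn : 2 ≤ n) {a b : Fin n} :
    (cycleGraph n).Adj a b ↔ CycleAdj n a b := by
  have key : ∀ x y : Fin n, (x - y).val = 1 ↔ x.val = y.val + 1 ∨ (x.val = 0 ∧ y.val + 1 = n) := by
    intro x y
    have hx := x.isLt
    have hy := y.isLt
    have hv : (x - y).val = (n - y.val + x.val) % n := by rw [Fin.sub_def]
    rw [hv]
    rcases le_or_gt y.val x.val with h | h
    · rw [show n - y.val + x.val = n + (x.val - y.val) by omega, Nat.add_mod_left,
        Nat.mod_eq_of_lt (by omega)]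
      omega
    · rw [Nat.mod_eq_of_lt (by omega)]
      omega
  rw [cycleGraph_adj', key, key, CycleAdj]
  omega

lemma isChordal_iff : IsChordal G ↔ ∀ n, 4 ≤ n → ∀ v : ℕ → V, Set.InjOn v (Set.Iio n) →
    ¬ ∀ i < n, ∀ j < n, (G.Adj (v i) (v j) ↔ CycleAdj n i j) := by
  constructor
  · intro hch n hn v hinj hadj
    have hinj' : Function.Injective fun i : Fin n => v i :=
      fun i j h => Fin.ext (hinj i.isLt j.isLt h)
    refine hch n hn (Set.range fun i : Fin n => v i) ⟨Iso.symm ⟨Equiv.ofInjective _ hinj', ?_⟩⟩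
    intro a b
    simp [hadj a a.isLt b b.isLt, cycleGraph_adj_iff_cycleAdj (by omega : 2 ≤ n)]
  · rintro h n hn S ⟨e⟩
    refine h n hn (fun i => e.symm ⟨i % n, Nat.mod_lt _ (by omega)⟩) (fun i hi j hj hij => ?_) ?_
    · simpa [Nat.mod_eq_of_lt hi, Nat.mod_eq_of_lt hj] using e.symm.injective (Subtype.ext hij)
    · intro i hi j hj
      have h := cycleGraph_adj_iff_cycleAdj (by omega : 2 ≤ n) (a := ⟨i, hi⟩) (b := ⟨j, hj⟩)
      rw [← e.symm.map_rel_iff] at h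
      simpa [Nat.mod_eq_of_lt hi, Nat.mod_eq_of_lt hj] using h

/-- The path has the `n` vertices `w 0, …, w (n - 1)`. -/
def IsInducedPath (G : SimpleGraph V) (w : ℕ → V) (n : ℕ) : Prop :=
  Set.InjOn w (Set.Iio n) ∧ ∀ i < n, ∀ j < n, (G.Adj (w i) (w j) ↔ i + 1 = j ∨ j + 1 = i)

lemma injOn_update_Iio {w : ℕ → V} {n : ℕ} (hw : Set.InjOn w (Set.Iio n)) {x : V}
    (hx : ∀ i < n, x ≠ w i) : Set.InjOn (Function.update w n x) (Set.Iio (n + 1)) := by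
  intro i hi j hj hij
  simp only [Set.mem_Iio, Function.update_apply] at hi hj hij
  split_ifs at hij with h1 h2 h2
  · omega
  · exact absurd hij (hx j (by omega))
  · exact absurd hij.symm (hx i (by omega))
  · exact hw (by simp; omega) (by simp; omega) hij

lemma isInducedPath_const (a : V) : IsInducedPath G (fun _ => a) 1 :=
  ⟨fun i hi j hj _ => by simp_all, fun i hi j hj => by simp; omega⟩

lemma IsInducedPath.update {w : ℕ → V} {n : ℕ} (hw : IsInducedPath G w n) {x : V}
    (hx : ∀ i < n, x ≠ w i) (hadj : ∀ i < n, (G.Adj x (w i) ↔ i + 1 = n)) :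
    IsInducedPath G (Function.update w n x) (n + 1) := by
  refine ⟨injOn_update_Iio hw.1 hx, fun i hi j hj => ?_⟩
  simp only [Function.update_apply]
  split_ifs with h1 h2 h2
  · simp; omega
  · rw [hadj j (by omega)]; omega
  · rw [G.adj_comm, hadj i (by omega)]; omega
  · exact hw.2 i (by omega) j (by omega)

lemma IsInducedPath.reachable {w : ℕ → V} {n : ℕ} (hw : IsInducedPath G w n) {i : ℕ}
    (hi : i < n) : G.Reachable (w 0) (w i) := by
  induction i with
  | zero => rfl
  | succ i ih => exact (ih (by omega)).trans ((hw.2 i (by omega) (i + 1) hi).2 (by omega)).reachable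

lemma IsInducedPath.shift {w : ℕ → V} {n : ℕ} (hw : IsInducedPath G w n) (b : ℕ) :
    IsInducedPath G (fun i => w (b + i)) (n - b) := by
  refine ⟨fun i hi j hj hij => ?_, fun i hi j hj => ?_⟩
  · simp only [Set.mem_Iio] at hi hj
    have := hw.1 (by simp; omega : b + i ∈ Set.Iio n) (by simp; omega : b + j ∈ Set.Iio n) hij
    omega
  · rw [hw.2 _ (by omega) _ (by omega)]
    omega

lemma IsChordal.exists_adj_of_isInducedPath (hch : IsChordal G) {w : ℕ → V} {n : ℕ}
    (hw : IsInducedPath G w (n + 1)) (hn : 2 ≤ n) {x : V} (hxw : ∀ i ≤ n, x ≠ w i)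
    (hx0 : G.Adj x (w 0)) (hxn : G.Adj x (w n)) : ∃ i, 0 < i ∧ i < n ∧ G.Adj x (w i) := by
  by_contra! hinner
  have hx : ∀ i ≤ n, (G.Adj x (w i) ↔ i = 0 ∨ i = n) := fun i hi => by
    rcases (by omega : i = 0 ∨ i = n ∨ (0 < i ∧ i < n)) with rfl | rfl | ⟨h0, hn⟩
    · simpa using hx0
    · simpa using hxn
    · simpa [h0.ne', hn.ne] using hinner i h0 hn
  refine isChordal_iff.1 hch (n + 2) (by omega) (Function.update w (n + 1) x)
    (injOn_update_Iio hw.1 fun i hi => hxw i (by omega)) fun i hi j hj => ?_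
  simp only [Function.update_apply, CycleAdj]
  split_ifs with h1 h2 h2
  · simp; omega
  · rw [hx j (by omega)]; omega
  · rw [G.adj_comm, hx i (by omega)]; omega
  · rw [hw.2 i (by omega) j (by omega)]; omega

lemma IsInducedPath.le_card [Finite V] {w : ℕ → V} {n : ℕ} (hw : IsInducedPath G w n) :
    n ≤ Nat.card V := by
  simpa [hw.1.ncard_image] using Set.ncard_le_card (w '' Set.Iio n)

/-- Otherwise the last earlier vertex of the path adjacent to `x` would close a chordless cycle
through `x`. -/
lemma IsChordal.isInducedPath_update (hch : IsChordal G) {w : ℕ → V} {n : ℕ}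
    (hw : IsInducedPath G w (n + 2)) {x : V} (hx : G.Adj (w (n + 1)) x)
    (hxn : x ∉ closedNbhd G (w n)) : IsInducedPath G (Function.update w (n + 2) x) (n + 3) := by
  simp only [mem_closedNbhd, not_or] at hxn
  have hxw : ∀ i < n + 2, x ≠ w i := by
    rintro i hi rfl
    rcases (by omega : i < n ∨ i = n ∨ i = n + 1) with hi | rfl | rfl
    · exact absurd ((hw.2 i (by omega) (n + 1) (by omega)).1 hx.symm) (by omega)
    · exact hxn.1 rfl
    · exact G.irrefl hx
  refine hw.update hxw fun i hi => ?_
  rcases (by omega : i < n ∨ i = n ∨ i = n + 1) with hi | rfl | rfl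
  · refine iff_of_false (fun hxi => ?_) (by omega)
    classical
    obtain ⟨b, hbn, hb, hmax⟩ : ∃ b < n, G.Adj x (w b) ∧
        ∀ j, b < j → j ≤ n → ¬ G.Adj x (w j) := by
      have hb := Nat.findGreatest_spec (P := fun i => G.Adj x (w i)) hi.le hxi
      exact ⟨_, lt_of_le_of_ne (Nat.findGreatest_le n) fun h => hxn.2 (h ▸ hb.symm), hb,
        fun j h1 h2 => Nat.findGreatest_is_greatest h1 h2⟩
    obtain ⟨j, hj0, hjn, hxj⟩ := hch.exists_adj_of_isInducedPath (n := n + 1 - b)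
      (by simpa [show n + 1 - b + 1 = n + 2 - b by omega] using hw.shift b) (by omega)
      (fun i hi => hxw _ (by omega)) (by simpa using hb)
      (by simpa [show b + (n + 1 - b) = n + 1 by omega] using hx.symm)
    rcases (by omega : b + j < n ∨ b + j = n) with hj | hj
    · exact hmax _ (by omega) hj.le hxj
    · exact hxn.2 (hj ▸ hxj.symm)
  · simpa using fun h => hxn.2 h.symm
  · simpa using hx.symm

lemma IsChordal.exists_neighborSet_subset_closedNbhd [Finite V] (hch : IsChordal G)
    {u₀ v₀ : V} (h₀ : G.Adj u₀ v₀) :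
    ∃ u v, G.Reachable u₀ u ∧ G.Adj u v ∧ G.neighborSet v ⊆ closedNbhd G u := by
  by_contra! hno
  have hlong : ∀ n, ∃ w, IsInducedPath G w (n + 2) ∧ w 0 = u₀ := by
    intro n
    induction n with
    | zero =>
      refine ⟨_, (isInducedPath_const u₀).update (x := v₀) (fun i hi => ?_) fun i hi => ?_, rfl⟩
      · obtain rfl : i = 0 := by omega
        exact h₀.ne'
      · obtain rfl : i = 0 := by omega
        simpa using h₀.symm
    | succ n ih =>
      obtain ⟨w, hw, rfl⟩ := ih
      obtain ⟨x, hx, hxn⟩ := Set.not_subset.1 (hno _ _ (hw.reachable (by omega))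
        ((hw.2 n (by omega) (n + 1) (by omega)).2 (by omega)))
      exact ⟨_, hch.isInducedPath_update hw hx hxn, by simp⟩
  obtain ⟨w, hw, -⟩ := hlong (Nat.card V)
  have := hw.le_card
  omega

lemma IsChordal.adj_or_adj_of_cycle4 (hch : IsChordal G) {a b a' b' : V} (hab : G.Adj a b)
    (hba' : G.Adj b a') (ha'b' : G.Adj a' b') (hb'a : G.Adj b' a) (haa' : a ≠ a')
    (hbb' : b ≠ b') :
    G.Adj a a' ∨ G.Adj b b' := by
  by_contra! h
  have hpath : IsInducedPath G (Function.update (Function.update (fun _ => a) 1 b) 2 a') 3 := by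
    refine ((isInducedPath_const a).update ?_ ?_).update ?_ ?_ <;> intro i hi
    all_goals
      interval_cases i <;>
        simp [hab.ne', hab.symm, hba'.symm, hba'.ne', haa'.symm, h.1, G.adj_comm a' a]
  have hb' : ∀ i ≤ 2, b' ≠ Function.update (Function.update (fun _ => a) 1 b) 2 a' i := by
    intro i hi
    interval_cases i <;> simp [hb'a.ne, ha'b'.ne', hbb'.symm]
  obtain ⟨i, hi0, hi2, hb'i⟩ := hch.exists_adj_of_isInducedPath (n := 2) hpath le_rfl hb'
    (by simpa using hb'a) (by simpa using ha'b'.symm)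
  obtain rfl : i = 1 := by omega
  exact h.2 (by simpa using hb'i.symm)

end Chordal

section Forward

variable {V : Type*} [Finite V] {G : SimpleGraph V} {k : ℕ}

lemma TotalKUniform.exists_dominating (huni : TotalKUniform G k) (hiso : NoIsolatedVerts G)
    (hch : IsChordal G) (K : G.ConnectedComponent) :
    ∃ u, G.connectedComponentMk u = K ∧ ∀ z, G.Reachable u z → z ∈ closedNbhd G u := by
  obtain ⟨v₀, rfl⟩ := K.exists_rep
  obtain ⟨w₀, h₀⟩ := hiso v₀
  obtain ⟨u, v, hu, huv, hv⟩ := hch.exists_neighborSet_subset_closedNbhd h₀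
  exact ⟨u, (ConnectedComponent.sound hu).symm, fun z hz =>
    huni.reachable_mem_closedNbhd hiso huv hv hz⟩

lemma TotalKUniform.neighborSet_eq_of_reachable (huni : TotalKUniform G k)
    (hiso : NoIsolatedVerts G) (hch : IsChordal G) {p q : V} (hpq : G.Reachable p q)
    (hne : p ≠ q) (hnadj : ¬ G.Adj p q) : G.neighborSet p = G.neighborSet q := by
  obtain ⟨u, hup, hu⟩ := huni.exists_dominating hiso hch (G.connectedComponentMk p)
  have hup := ConnectedComponent.exact hup
  exact huni.neighborSet_eq_of_not_adj hiso hu hup (hup.trans hpq) hne hnadj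

lemma TotalKUniform.eq_two_mul_card_connectedComponent (huni : TotalKUniform G k)
    (hiso : NoIsolatedVerts G) (hch : IsChordal G) : k = 2 * Nat.card G.ConnectedComponent := by
  choose u hmk hdom using huni.exists_dominating hiso hch
  choose b hb using fun K => hiso (u K)
  have hcover z :
      G.Adj (u (G.connectedComponentMk z)) z ∨ G.Adj (b (G.connectedComponentMk z)) z := by
    set K := G.connectedComponentMk z
    rcases hdom K z (ConnectedComponent.exact (hmk K)) with h | h
    · exact Or.inr (h ▸ (hb K).symm)
    · exact Or.inl h
  obtain ⟨s, hs, hlen⟩ := exists_totalDomSeq_of_blocks G.connectedComponentMk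
    (fun _ _ h => ConnectedComponent.sound h.reachable) hmk hb hcover
  exact hlen ▸ (huni.length_eq hs).symm

/-- Components are indexed through `Fin`, and parts are the neighbourhoods, coded by an
injection `Set V → ℕ`. -/
lemma TotalKUniform.disjUnionCompMultipartiteOneBig (huni : TotalKUniform G k)
    (hiso : NoIsolatedVerts G) (hch : IsChordal G) :
    DisjUnionCompMultipartiteOneBig G (Nat.card G.ConnectedComponent) := by
  obtain ⟨ι, hι⟩ := exists_injective_nat (Set V)
  set e := Finite.equivFin G.ConnectedComponent
  have hadj : ∀ u v, G.Adj u v ↔ e (G.connectedComponentMk u) = e (G.connectedComponentMk v) ∧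
      ι (G.neighborSet u) ≠ ι (G.neighborSet v) := by
    intro u v
    rw [e.injective.eq_iff, hι.ne_iff]
    refine ⟨fun h => ⟨ConnectedComponent.sound h.reachable, fun hN => ?_⟩, fun ⟨hK, hN⟩ => ?_⟩
    · exact G.irrefl (show v ∈ G.neighborSet v from hN ▸ h)
    · by_contra hnadj
      exact hN (huni.neighborSet_eq_of_reachable hiso hch (ConnectedComponent.exact hK)
        (fun h => hN (h ▸ rfl)) hnadj)
  refine ⟨fun v => e (G.connectedComponentMk v), fun v => ι (G.neighborSet v), hadj,
    fun i => ?_, fun i j₁ j₂ h₁ h₂ => ?_⟩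
  · obtain ⟨v, hv⟩ := (e.symm i).exists_rep
    obtain ⟨w, hw⟩ := hiso v
    refine ⟨v, w, ?_, ?_, ((hadj _ _).1 hw).2⟩
    · exact (congrArg e hv).trans (e.apply_symm_apply i)
    · show e (G.connectedComponentMk w) = i
      rw [← ConnectedComponent.sound hw.reachable]
      exact (congrArg e hv).trans (e.apply_symm_apply i)
  · by_contra hne
    obtain ⟨a, ⟨ha, rfl⟩, a', ⟨ha', ha'j⟩, haa'⟩ := (Set.one_lt_ncard (Set.toFinite _)).1 h₁
    obtain ⟨b, ⟨hb, rfl⟩, b', ⟨hb', hb'j⟩, hbb'⟩ := (Set.one_lt_ncard (Set.toFinite _)).1 h₂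
    have hcross : ∀ x y, e (G.connectedComponentMk x) = i → e (G.connectedComponentMk y) = i →
        ι (G.neighborSet x) = ι (G.neighborSet a) → ι (G.neighborSet y) = ι (G.neighborSet b) →
        G.Adj x y := fun x y hx hy hxa hyb =>
      (hadj x y).2 ⟨hx.trans hy.symm, by rwa [hxa, hyb]⟩
    rcases hch.adj_or_adj_of_cycle4 (hcross a b ha hb rfl rfl) (hcross a' b ha' hb ha'j rfl).symm
      (hcross a' b' ha' hb' ha'j hb'j) (hcross a b' ha hb' rfl hb'j).symm haa' hbb' with h | h
    · exact ((hadj _ _).1 h).2 ha'j.symm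
    · exact ((hadj _ _).1 h).2 hb'j.symm

end Forward

section Multipartite

variable {V ι κ : Type*} {G : SimpleGraph V} {f : V → ι} {c : V → κ}

/-- The new neighbour of an appended vertex `x` lies in a part `P` of the block of `x`, and all
earlier vertices of that block must lie in `P`. -/
lemma LegalSeq.parts_distinct_and_not_three_in_block
    (hiff : ∀ u v, G.Adj u v ↔ f u = f v ∧ c u ≠ c v) {s : List V} (hs : LegalSeq G s) :
    (∀ y ∈ s, ∀ z ∈ s, f y = f z → c y = c z → y = z) ∧
      ∀ x ∈ s, ∀ y ∈ s, ∀ z ∈ s, f x = f y → f x = f z → x = y ∨ x = z ∨ y = z := by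
  induction s using List.reverseRecOn with
  | nil => simp
  | append_singleton s x ih =>
    obtain ⟨hs, hx, hwit⟩ := legalSeq_append_singleton_iff.1 hs
    obtain ⟨h1, h2⟩ := ih hs
    rcases hwit with rfl | ⟨w, hxw, hw⟩
    · simp
    rw [hiff] at hxw
    have hpart : ∀ y ∈ s, f y = f x → c y = c w := fun y hy hyx => by
      by_contra hc
      exact hw ⟨y, hy, (hiff y w).2 ⟨hyx.trans hxw.1, hc⟩⟩
    have hs2 : ∀ y ∈ s, ∀ z ∈ s, f y = f x → f z = f x → y = z := fun y hy z hz hyx hzx =>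
      h1 y hy z hz (hyx.trans hzx.symm) ((hpart y hy hyx).trans (hpart z hz hzx).symm)
    simp only [List.mem_append, List.mem_singleton]
    constructor
    · rintro y (hy | rfl) z (hz | rfl) hf hc
      · exact h1 y hy z hz hf hc
      · exact absurd (hc ▸ hpart y hy hf) hxw.2
      · exact absurd (hc ▸ hpart z hz hf.symm) hxw.2
      · rfl
    · rintro a (ha | rfl) y (hy | rfl) z (hz | rfl) hfy hfz
      · exact h2 a ha y hy z hz hfy hfz
      all_goals grind

lemma LegalSeq.length_le_two_mul_card [Fintype ι]
    (hiff : ∀ u v, G.Adj u v ↔ f u = f v ∧ c u ≠ c v) {s : List V} (hs : LegalSeq G s) :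
    s.length ≤ 2 * Fintype.card ι := by
  classical
  have hthree := (hs.parts_distinct_and_not_three_in_block hiff).2
  rw [← List.toFinset_card_of_nodup hs.1, ← Finset.card_univ]
  refine Finset.card_le_mul_card_image_of_maps_to (f := f) (fun _ _ => Finset.mem_univ _) 2
    fun i _ => ?_
  by_contra! h
  obtain ⟨x, hx, y, hy, z, hz, hxy, hxz, hyz⟩ := Finset.two_lt_card.1 h
  simp only [Finset.mem_filter, List.mem_toFinset] at hx hy hz
  rcases hthree x hx.1 y hy.1 z hz.1 (hx.2.trans hy.2.symm) (hx.2.trans hz.2.symm) with h | h | h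
  exacts [hxy h, hxz h, hyz h]

lemma two_mul_card_le_ncard_of_totalDomSet [Finite V] [Fintype ι] (β : V → ι)
    (hβ : ∀ u v, G.Adj u v → β u = β v) (hsurj : Function.Surjective β) {A : Set V}
    (hA : TotalDomSet G A) : 2 * Fintype.card ι ≤ A.ncard := by
  classical
  have := Fintype.ofFinite V
  rw [Set.ncard_eq_toFinset_card', ← Finset.card_univ]
  refine Finset.mul_card_image_le_card_of_maps_to (f := β) (fun _ _ => Finset.mem_univ _) 2
    fun i _ => ?_
  obtain ⟨p, rfl⟩ := hsurj i
  obtain ⟨a, ha, hpa⟩ := hA p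
  obtain ⟨a', ha', haa'⟩ := hA a
  refine Finset.one_lt_card.2 ⟨a, ?_, a', ?_, haa'.ne⟩
  · simpa [ha] using (hβ _ _ hpa).symm
  · simpa [ha'] using ((hβ _ _ hpa).trans (hβ _ _ haa')).symm

lemma isChordal_of_adj_iff [Finite V] (hiff : ∀ u v, G.Adj u v ↔ f u = f v ∧ c u ≠ c v)
    (hbig : ∀ i j₁ j₂, 1 < {x | f x = i ∧ c x = j₁}.ncard → 1 < {x | f x = i ∧ c x = j₂}.ncard →
      j₁ = j₂) : IsChordal G := by
  rw [isChordal_iff]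
  intro n hn v hinj hcyc
  have hadj : ∀ i j, i < n → j < n → CycleAdj n i j → f (v i) = f (v j) ∧ c (v i) ≠ c (v j) :=
    fun i j hi hj h => (hiff _ _).1 ((hcyc i hi j hj).2 h)
  have hnadj : ∀ i j, i < n → j < n → ¬ CycleAdj n i j → f (v i) = f (v j) →
      c (v i) = c (v j) := fun i j hi hj h hf => by
    by_contra hc
    exact h ((hcyc i hi j hj).1 ((hiff _ _).2 ⟨hf, hc⟩))
  obtain ⟨hf01, hc01⟩ := hadj 0 1 (by omega) (by omega) (Or.inl rfl)
  obtain ⟨hf12, -⟩ := hadj 1 2 (by omega) (by omega) (Or.inl rfl)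
  obtain ⟨hf23, -⟩ := hadj 2 3 (by omega) (by omega) (Or.inl rfl)
  have hc02 := hnadj 0 2 (by omega) (by omega) (by simp only [CycleAdj]; omega) (hf01.trans hf12)
  have hc13 := hnadj 1 3 (by omega) (by omega) (by simp only [CycleAdj]; omega) (hf12.trans hf23)
  refine hc01 ?_
  rcases (by omega : n = 4 ∨ 5 ≤ n) with rfl | hn5
  · have hne : ∀ i j, i < 4 → j < 4 → i ≠ j → v i ≠ v j := fun i j hi hj hij h =>
      hij (hinj (by simpa using hi) (by simpa using hj) h)
    refine hbig (f (v 0)) _ _ ((Set.one_lt_ncard (Set.toFinite _)).2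
      ⟨v 0, ⟨rfl, rfl⟩, v 2, ⟨(hf01.trans hf12).symm, hc02.symm⟩, hne 0 2 (by omega) (by omega)
        (by omega)⟩) ((Set.one_lt_ncard (Set.toFinite _)).2
      ⟨v 1, ⟨hf01.symm, rfl⟩, v 3, ⟨(hf01.trans (hf12.trans hf23)).symm, hc13.symm⟩,
        hne 1 3 (by omega) (by omega) (by omega)⟩)
  · have hc03 := hnadj 0 3 (by omega) (by omega) (by simp only [CycleAdj]; omega)
      (hf01.trans (hf12.trans hf23))
    exact hc03.trans hc13.symm

end Multipartite

section Main

variable {V : Type*} [Finite V] {G : SimpleGraph V} {m : ℕ}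

lemma DisjUnionCompMultipartiteOneBig.totalKUniform (h : DisjUnionCompMultipartiteOneBig G m) :
    TotalKUniform G (2 * m) := by
  obtain ⟨f, c, hiff, hpart, -⟩ := h
  choose a b ha hb hab using hpart
  have hβ : ∀ u v, G.Adj u v → f u = f v := fun u v h => ((hiff u v).1 h).1
  have hdom z : G.Adj (a (f z)) z ∨ G.Adj (b (f z)) z := by
    by_cases hcz : c (a (f z)) = c z
    · exact Or.inr ((hiff _ _).2 ⟨hb _, fun h => hab _ (hcz.trans h.symm)⟩)
    · exact Or.inl ((hiff _ _).2 ⟨ha _, hcz⟩)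
  obtain ⟨s, hs, hlen⟩ := exists_totalDomSeq_of_blocks f hβ ha
    (fun i => (hiff _ _).2 ⟨(ha i).trans (hb i).symm, hab i⟩) hdom
  rw [Nat.card_eq_fintype_card, Fintype.card_fin] at hlen
  refine totalKUniform_of_totalDomSeq hs hlen (fun s' hs' => ?_) fun A hA => ?_
  · simpa using hs'.1.length_le_two_mul_card hiff
  · simpa using two_mul_card_le_ncard_of_totalDomSet f hβ (fun i => ⟨a i, ha i⟩) hA

lemma DisjUnionCompMultipartiteOneBig.isChordal (h : DisjUnionCompMultipartiteOneBig G m) :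
    IsChordal G :=
  let ⟨_, _, hiff, _, hbig⟩ := h
  isChordal_of_adj_iff hiff hbig

end Main

theorem stmt_18_general {V : Type*} [Finite V] (G : SimpleGraph V) (k : ℕ)
    (hiso : NoIsolatedVerts G) :
    (TotalKUniform G k ∧ IsChordal G) ↔
      ∃ m : ℕ, k = 2 * m ∧ DisjUnionCompMultipartiteOneBig G m := by
  constructor
  · rintro ⟨huni, hch⟩
    exact ⟨_, huni.eq_two_mul_card_connectedComponent hiso hch,
      huni.disjUnionCompMultipartiteOneBig hiso hch⟩
  · rintro ⟨m, rfl, h⟩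
    exact ⟨h.totalKUniform, h.isChordal⟩

/-- A graph without isolated vertices is a total `k`-uniform chordal graph iff it is the
disjoint union of `k/2` complete multipartite graphs, each having at least two parts and at
most one part of size greater than 1. -/
theorem stmt_18 {V : Type*} [Finite V] (G : SimpleGraph V) (k : ℕ) (hk : 0 < k)
    (hiso : NoIsolatedVerts G) :
    (TotalKUniform G k ∧ IsChordal G) ↔
      ∃ m : ℕ, k = 2 * m ∧ DisjUnionCompMultipartiteOneBig G m :=
  stmt_18_general G k hiso
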